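/- arXiv:2304.07516 — 3 statements merged into one kernel-verified Lean document; each statement's English description precedes it below -/
import Mathlib

section
/- Let q be a prime power, n ≥ 1, and set d = ⌈3·log n / log q + 3⌉. Then there exists a 4-term linearly independent set S ⊆ (F_q)^d with |S| = n. In particular, S is a linear Sidon set and |F_q^d| = q^d ≤ q^4 · n^3. -/
/-!
Greedy construction: a set `S` is 4-term linearly independent as long as no new vector lies in
the span of three old ones, and the spans of at most three vectors of `S` cover at most
`|S|³ q³ + 1` points. The choice of `d` gives `n³ q³ ≤ q^d`, so `n` vectors can be picked one by
one; the Sidon property follows because a coincidence `a x + b y = a x' + b y'` between distinct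
pairs is a nontrivial linear relation among at most four vectors of `S`.
-/

def kTermLI (F : Type*) [Field F] {d : ℕ} (t : ℕ) (S : Set (Fin d → F)) : Prop :=
  ∀ T : Finset (Fin d → F), (T : Set (Fin d → F)) ⊆ S → T.card ≤ t →
    LinearIndependent F (fun x : (T : Set (Fin d → F)) => (x : Fin d → F))

def LinearSidon (F : Type*) [Field F] {d : ℕ} (S : Set (Fin d → F)) : Prop :=
  ∀ a b : F, a ≠ 0 → b ≠ 0 → ∀ x y x' y' : Fin d → F,
    x ∈ S → y ∈ S → x' ∈ S → y' ∈ S → x ≠ y → x' ≠ y' →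
    a • x + b • y = a • x' + b • y' → ({x, y} : Set (Fin d → F)) = {x', y'}

open Finset Submodule

section
variable {F : Type*} [Field F] {d : ℕ}

theorem kTermLI.linearIndepOn {t : ℕ} {S : Set (Fin d → F)} (hS : kTermLI F t S)
    {T : Finset (Fin d → F)} (hTS : ↑T ⊆ S) (hT : #T ≤ t) :
    LinearIndepOn F id (T : Set (Fin d → F)) :=
  hS T hTS hT

theorem kTermLI.insert_of_notMem_span {t : ℕ} {S : Set (Fin d → F)} (hS : kTermLI F (t + 1) S)
    {x : Fin d → F}
    (hx : ∀ T : Finset (Fin d → F), ↑T ⊆ S → #T ≤ t → x ∉ span F (T : Set (Fin d → F))) :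
    kTermLI F (t + 1) (insert x S) := by
  classical
  intro T hT hTt
  by_cases hxT : x ∈ T
  · have hT' : ↑(T.erase x) ⊆ S := by
      rw [coe_erase]; exact Set.sdiff_singleton_subset_iff.mpr hT
    have hTx : #(T.erase x) ≤ t := by rw [card_erase_of_mem hxT]; omega
    rw [← insert_erase hxT, coe_insert]
    exact (hS.linearIndepOn hT' (by omega)).id_insert (hx _ hT' hTx)
  · exact hS T ((Set.subset_insert_iff_of_notMem (by simpa using hxT)).mp hT) hTt

theorem LinearSidon.of_kTermLI {S : Set (Fin d → F)} (hS : kTermLI F 4 S) : LinearSidon F S := by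
  classical
  intro a b ha hb x y x' y' hx hy hx' hy' hxy hxy' heq
  set T : Finset (Fin d → F) := {x, y, x', y'}
  have hTS : ↑T ⊆ S := by simp [T, Set.insert_subset_iff, hx, hy, hx', hy']
  set l : (Fin d → F) →₀ F :=
    Finsupp.single x a + Finsupp.single y b - Finsupp.single x' a - Finsupp.single y' b
  have hl : l = 0 := by
    refine linearIndepOn_iff.mp (hS.linearIndepOn hTS card_le_four) l ?_ ?_
    · simp only [l]
      refine sub_mem (sub_mem (add_mem ?_ ?_) ?_) ?_ <;>
        exact Finsupp.single_mem_supported F _ (by simp [T])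
    · simp [l, heq]
  have hl_apply (z : Fin d → F) : l z = 0 := by rw [hl]; rfl
  have hx_mem : x = x' ∨ x = y' := by
    by_contra! h
    simpa [l, hxy, h.1, h.2, ha] using hl_apply x
  have hy_mem : y = x' ∨ y = y' := by
    by_contra! h
    simpa [l, Ne.symm hxy, h.1, h.2, hb] using hl_apply y
  rcases hx_mem with rfl | rfl <;> rcases hy_mem with rfl | rfl
  · exact absurd rfl hxy
  · rfl
  · exact Set.pair_comm _ _
  · exact absurd rfl hxy

theorem exists_finset_forall_span_subset [Fintype F] (S : Finset (Fin d → F)) (k : ℕ) :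
    ∃ B : Finset (Fin d → F), #B ≤ #S ^ k * Fintype.card F ^ k + 1 ∧
      ∀ T : Finset (Fin d → F), T ⊆ S → #T ≤ k →
        (span F (T : Set (Fin d → F)) : Set (Fin d → F)) ⊆ ↑B := by
  classical
  refine ⟨insert 0 ((univ : Finset ((Fin k → F) × (Fin k → S))).image
    fun p => ∑ i, p.1 i • (p.2 i : Fin d → F)), ?_, ?_⟩
  · refine (card_insert_le _ _).trans (Nat.add_le_add_right (card_image_le.trans ?_) 1)
    simp [mul_comm]
  intro T hTS hTk z hz
  rcases T.eq_empty_or_nonempty with rfl | ⟨t, ht⟩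
  · simp_all
  obtain ⟨e⟩ : Nonempty (T ↪ Fin k) :=
    Function.Embedding.nonempty_of_card_le (by simpa using hTk)
  have : Nonempty T := ⟨⟨t, ht⟩⟩
  set v : Fin k → T := Function.invFun e
  have hrange : (T : Set (Fin d → F)) = Set.range fun i => (v i : Fin d → F) := by
    rw [Set.range_comp' Subtype.val, (Function.invFun_surjective e.injective).range_eq]
    simp
  rw [SetLike.mem_coe, hrange, mem_span_range_iff_exists_fun] at hz
  obtain ⟨c, rfl⟩ := hz
  exact mem_insert_of_mem (mem_image.mpr ⟨(c, fun i => ⟨v i, hTS (v i).2⟩), mem_univ _, rfl⟩)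

theorem kTermLI.exists_insert [Fintype F] {k : ℕ} (hk : k ≠ 0) {S : Finset (Fin d → F)}
    (hS : kTermLI F (k + 1) (S : Set (Fin d → F)))
    (hcard : #S ^ k * Fintype.card F ^ k + 1 < Fintype.card F ^ d) :
    ∃ x ∉ S, kTermLI F (k + 1) (insert x (S : Set (Fin d → F))) := by
  obtain ⟨B, hB, hspan⟩ := exists_finset_forall_span_subset S k
  obtain ⟨x, -, hxB⟩ := exists_mem_notMem_of_card_lt_card (t := univ)
    (hB.trans_lt (by simpa using hcard))
  have hx (T : Finset (Fin d → F)) (hTS : ↑T ⊆ (S : Set (Fin d → F))) (hTk : #T ≤ k) :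
      x ∉ span F (T : Set (Fin d → F)) :=
    fun hxT ↦ hxB (hspan T (coe_subset.mp hTS) hTk hxT)
  refine ⟨x, fun hxS ↦ hx {x} (by simpa using hxS) (by simpa [Nat.one_le_iff_ne_zero] using hk)
    (subset_span (by simp)), hS.insert_of_notMem_span hx⟩

theorem exists_finset_card_eq_kTermLI [Fintype F] {k : ℕ} (hk : k ≠ 0) {m : ℕ}
    (hm : ∀ j < m, j ^ k * Fintype.card F ^ k + 1 < Fintype.card F ^ d) :
    ∃ S : Finset (Fin d → F), #S = m ∧ kTermLI F (k + 1) (S : Set (Fin d → F)) := by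
  induction m with
  | zero =>
    refine ⟨∅, card_empty, fun T hT _ ↦ ?_⟩
    rw [coe_empty, Set.subset_empty_iff] at hT
    rw [hT]
    exact linearIndependent_empty F (Fin d → F)
  | succ m ih =>
    classical
    obtain ⟨S, rfl, hS⟩ := ih fun j hj ↦ hm j (by omega)
    obtain ⟨x, hxS, hx⟩ := hS.exists_insert hk (hm _ (by omega))
    exact ⟨insert x S, card_insert_of_notMem hxS, by rwa [coe_insert]⟩

end

theorem pow_le_pow_ceil_log_div_log {q n k d : ℕ} (hq : 1 < q) (hn : n ≠ 0)
    (hd : d = ⌈k * Real.log n / Real.log q + k⌉₊) :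
    n ^ k * q ^ k ≤ q ^ d ∧ q ^ d ≤ q ^ (k + 1) * n ^ k := by
  have hq₀ : (0 : ℝ) < q := by positivity
  have hq₁ : (1 : ℝ) < q := by exact_mod_cast hq
  have hL : 0 ≤ k * Real.log n / Real.log q + k := by
    have : 0 ≤ Real.log n := Real.log_natCast_nonneg n
    have : 0 < Real.log q := Real.log_pos hq₁
    positivity
  have hqL : (q : ℝ) ^ (k * Real.log n / Real.log q + k) = n ^ k * q ^ k := by
    have : k * Real.log n / Real.log q = Real.logb q ((n : ℝ) ^ k) := by
      rw [Real.logb, Real.log_pow]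
    rw [this, Real.rpow_add hq₀, Real.rpow_logb hq₀ hq₁.ne' (by positivity), Real.rpow_natCast]
  constructor
  · have := Real.rpow_le_rpow_of_exponent_le hq₁.le (hd ▸ Nat.le_ceil _)
    rw [hqL, Real.rpow_natCast] at this
    exact_mod_cast this
  · have := Real.rpow_le_rpow_of_exponent_le hq₁.le (hd ▸ (Nat.ceil_lt_add_one hL).le)
    rw [Real.rpow_natCast, Real.rpow_add_one hq₀.ne', hqL] at this
    exact_mod_cast this.trans_eq (by ring : (n : ℝ) ^ k * q ^ k * q = q ^ (k + 1) * n ^ k)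

theorem stmt4_general (q : ℕ) (F : Type*) [Field F] [Fintype F]
    (hF : Fintype.card F = q) (n : ℕ) (hn : 1 ≤ n) (d : ℕ)
    (hd : d = ⌈3 * Real.log n / Real.log q + 3⌉₊) :
    ∃ S : Finset (Fin d → F), S.card = n ∧ kTermLI F 4 (S : Set (Fin d → F)) ∧
      LinearSidon F (S : Set (Fin d → F)) ∧
      Fintype.card (Fin d → F) ≤ q ^ 4 * n ^ 3 := by
  have hq : 1 < q := hF ▸ Fintype.one_lt_card
  obtain ⟨hlower, hupper⟩ :=
    pow_le_pow_ceil_log_div_log (n := n) (k := 3) hq (by omega) (by exact_mod_cast hd)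
  have hroom (j : ℕ) (hj : j < n) : j ^ 3 * q ^ 3 + 1 < q ^ d :=
    calc j ^ 3 * q ^ 3 + 1 < (j ^ 3 + 1) * q ^ 3 := by nlinarith [Nat.one_lt_pow three_ne_zero hq]
      _ ≤ n ^ 3 * q ^ 3 := Nat.mul_le_mul_right _ (Nat.pow_lt_pow_left hj three_ne_zero)
      _ ≤ q ^ d := hlower
  obtain ⟨S, hSn, hS⟩ :=
    exists_finset_card_eq_kTermLI (F := F) (k := 3) three_ne_zero (hF ▸ hroom)
  exact ⟨S, hSn, hS, .of_kTermLI hS, by simpa [hF] using hupper⟩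

theorem stmt4 (q : ℕ) (hq : IsPrimePow q) (F : Type*) [Field F] [Fintype F]
    (hF : Fintype.card F = q) (n : ℕ) (hn : 1 ≤ n) (d : ℕ)
    (hd : d = ⌈3 * Real.log n / Real.log q + 3⌉₊) :
    ∃ S : Finset (Fin d → F), S.card = n ∧ kTermLI F 4 (S : Set (Fin d → F)) ∧
      LinearSidon F (S : Set (Fin d → F)) ∧
      Fintype.card (Fin d → F) ≤ q ^ 4 * n ^ 3 :=
  stmt4_general q F hF n hn d hd
end

section
/- Let q be a prime power, t ≥ 1, n ≥ 1, and set d = ⌈(2t−1)·log n / log q + (2t−1)⌉. Then there exists a t-term linearly independent set S ⊆ (F_q)^d with |S| = n. -/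
open Submodule

section
variable {F : Type*} [Field F] {d t : ℕ}

theorem kTermLI_empty : kTermLI F t ((∅ : Finset (Fin d → F)) : Set (Fin d → F)) := by
  intro T hT _
  rw [Finset.coe_empty, Set.subset_empty_iff] at hT
  rw [hT]
  exact linearIndepOn_empty F id

theorem kTermLI.insert {S : Finset (Fin d → F)} {v : Fin d → F}
    (hS : kTermLI F t (S : Set (Fin d → F)))
    (hv : ∀ T ⊆ S, T.card < t → v ∉ span F (T : Set (Fin d → F))) :
    kTermLI F t (insert v (S : Set (Fin d → F))) := by
  classical
  intro T hTS hTt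
  rw [← Finset.coe_insert, Finset.coe_subset, Finset.subset_insert_iff] at hTS
  by_cases hvT : v ∈ T
  · have hcard : (T.erase v).card < t := (Finset.card_erase_lt_of_mem hvT).trans_le hTt
    rw [← Finset.insert_erase hvT, Finset.coe_insert]
    exact (linearIndepOn_id_insert (by simp)).mpr
      ⟨hS _ (Finset.coe_subset.mpr hTS) hcard.le, hv _ hTS hcard⟩
  · rw [Finset.erase_eq_of_notMem hvT] at hTS
    exact hS T (Finset.coe_subset.mpr hTS) hTt

variable [Fintype F]

theorem ncard_span_finset_le (T : Finset (Fin d → F)) :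
    (span F (T : Set (Fin d → F)) : Set (Fin d → F)).ncard ≤ Fintype.card F ^ T.card := by
  rw [← Nat.card_coe_set_eq, SetLike.coe_sort_coe, Module.natCard_eq_pow_finrank (K := F),
    Nat.card_eq_fintype_card]
  exact Nat.pow_le_pow_right Fintype.card_pos (finrank_span_finset_le_card T)

variable [DecidableEq F]

/-- Every span of at most `k` vectors of `S` lies in the span of exactly `min k #S` of them, so this
set contains all vectors in the span of at most `k` vectors of `S`. -/
noncomputable def shortSpans (k : ℕ) (S : Finset (Fin d → F)) : Finset (Fin d → F) :=
  (S.powersetCard (min k S.card)).biUnion fun T =>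
    (span F (T : Set (Fin d → F)) : Set (Fin d → F)).toFinite.toFinset

theorem mem_shortSpans {k : ℕ} {S T : Finset (Fin d → F)} {v : Fin d → F} (hTS : T ⊆ S)
    (hTk : T.card ≤ k) (hv : v ∈ span F (T : Set (Fin d → F))) : v ∈ shortSpans k S := by
  obtain ⟨U, hTU, hUS, hUcard⟩ := Finset.exists_subsuperset_card_eq hTS
    (le_min hTk (Finset.card_le_card hTS)) (min_le_right _ _)
  exact Finset.mem_biUnion.mpr ⟨U, Finset.mem_powersetCard.mpr ⟨hUS, hUcard⟩,
    (Set.Finite.mem_toFinset _).mpr (span_mono (Finset.coe_subset.mpr hTU) hv)⟩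

theorem card_shortSpans_le (k : ℕ) (S : Finset (Fin d → F)) :
    (shortSpans k S).card ≤ ((S.card + 1) * Fintype.card F) ^ k := by
  set j := min k S.card
  calc (shortSpans k S).card ≤ S.card.choose j * Fintype.card F ^ j := by
        rw [← Finset.card_powersetCard]
        refine Finset.card_biUnion_le_card_mul _ _ _ fun T hT => ?_
        rw [← Set.ncard_eq_toFinset_card]
        exact (ncard_span_finset_le T).trans_eq (congrArg _ (Finset.mem_powersetCard.mp hT).2)
    _ ≤ ((S.card + 1) * Fintype.card F) ^ j := by
        rw [mul_pow]
        exact Nat.mul_le_mul_right _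
          ((Nat.choose_le_pow _ _).trans (Nat.pow_le_pow_left (by omega) _))
    _ ≤ ((S.card + 1) * Fintype.card F) ^ k :=
        Nat.pow_le_pow_right (Nat.mul_pos (by omega) Fintype.card_pos) (min_le_left _ _)

theorem exists_kTermLI_insert {S : Finset (Fin d → F)} (hS : kTermLI F t (S : Set (Fin d → F)))
    (hcard : S.card + ((S.card + 1) * Fintype.card F) ^ (t - 1) < Fintype.card F ^ d) :
    ∃ v ∉ S, kTermLI F t (insert v (S : Set (Fin d → F))) := by
  obtain ⟨v, -, hv⟩ := Finset.exists_mem_notMem_of_card_lt_card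
    (s := S ∪ shortSpans (t - 1) S) (t := Finset.univ) <| by
      rw [Finset.card_univ, Fintype.card_fun, Fintype.card_fin]
      exact (Finset.card_union_le _ _).trans_lt
        ((Nat.add_le_add_left (card_shortSpans_le _ _) _).trans_lt hcard)
  rw [Finset.mem_union, not_or] at hv
  exact ⟨v, hv.1, hS.insert fun T hTS hTt hvT => hv.2 (mem_shortSpans hTS (by omega) hvT)⟩

theorem exists_kTermLI_card {n : ℕ}
    (h : n + (n * Fintype.card F) ^ (t - 1) ≤ Fintype.card F ^ d) :
    ∃ S : Finset (Fin d → F), S.card = n ∧ kTermLI F t (S : Set (Fin d → F)) := by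
  induction n with
  | zero => exact ⟨∅, rfl, kTermLI_empty⟩
  | succ m ih =>
    obtain ⟨S, rfl, hS⟩ := ih <| le_trans (by gcongr <;> omega) h
    obtain ⟨v, hvS, hv⟩ := exists_kTermLI_insert hS (by omega)
    exact ⟨insert v S, Finset.card_insert_of_notMem hvS, by rwa [Finset.coe_insert]⟩

end

theorem add_pow_le_pow_two_mul_sub_one {n q t : ℕ} (hn : 1 ≤ n) (hq : 2 ≤ q) (ht : 1 ≤ t) :
    n + (n * q) ^ (t - 1) ≤ (n * q) ^ (2 * t - 1) := by
  have hx : 2 * n ≤ n * q := by nlinarith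
  have hpos : 1 ≤ (n * q) ^ (t - 1) := Nat.one_le_pow _ _ (by omega)
  calc n + (n * q) ^ (t - 1) ≤ 2 * n * (n * q) ^ (t - 1) := by nlinarith
    _ ≤ n * q * (n * q) ^ (t - 1) := Nat.mul_le_mul_right _ hx
    _ = (n * q) ^ t := by rw [← pow_succ', Nat.sub_add_cancel ht]
    _ ≤ (n * q) ^ (2 * t - 1) := Nat.pow_le_pow_right (by omega) (by omega)

theorem mul_pow_le_pow_of_log_le {n q e d : ℕ} (hn : 1 ≤ n) (hq : 2 ≤ q)
    (hd : (e : ℝ) * Real.log n / Real.log q + e ≤ d) : (n * q) ^ e ≤ q ^ d := by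
  have hq' : (1 : ℝ) < q := by exact_mod_cast hq
  have hlog : Real.logb q (((n * q : ℕ) : ℝ) ^ e) ≤ d := by
    rw [Real.logb_pow, Nat.cast_mul, Real.logb_mul (by positivity) (by positivity),
      Real.logb_self_eq_one hq', Real.logb, mul_add, mul_one, ← mul_div_assoc]
    exact hd
  rw [Real.logb_le_iff_le_rpow hq' (by positivity), Real.rpow_natCast] at hlog
  exact_mod_cast hlog

theorem stmt5_general (q : ℕ) (F : Type*) [Field F] [Fintype F]
    (hF : Fintype.card F = q) (t n : ℕ) (ht : 1 ≤ t) (hn : 1 ≤ n) (d : ℕ)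
    (hd : d = ⌈(2 * t - 1 : ℕ) * Real.log n / Real.log q + (2 * t - 1 : ℕ)⌉₊) :
    ∃ S : Finset (Fin d → F), S.card = n ∧ kTermLI F t (S : Set (Fin d → F)) := by
  classical
  have hq : 2 ≤ q := hF ▸ Fintype.one_lt_card
  have hpow : (n * q) ^ (2 * t - 1) ≤ q ^ d :=
    mul_pow_le_pow_of_log_le hn hq (hd ▸ Nat.le_ceil _)
  subst hF
  exact exists_kTermLI_card ((add_pow_le_pow_two_mul_sub_one hn hq ht).trans hpow)

theorem stmt5 (q : ℕ) (hq : IsPrimePow q) (F : Type*) [Field F] [Fintype F]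
    (hF : Fintype.card F = q) (t n : ℕ) (ht : 1 ≤ t) (hn : 1 ≤ n) (d : ℕ)
    (hd : d = ⌈(2 * t - 1 : ℕ) * Real.log n / Real.log q + (2 * t - 1 : ℕ)⌉₊) :
    ∃ S : Finset (Fin d → F), S.card = n ∧ kTermLI F t (S : Set (Fin d → F)) :=
  stmt5_general q F hF t n ht hn d hd
end

section
/- Let q ≥ 2 be a prime power and k ≥ 1. Let R ⊆ F_q^k and suppose that for every r ∈ R there exists an index i_r ∈ [k] such that for all r' ∈ F_q^k with Hamming(r, r') ≤ 2 and with coordinate i_r among the differing coordinates, r' ∉ R. Then each point of F_q^k \ R lies in at most one set T_{r'} = {r' + a·e_{i_{r'}} : a ∈ F_q^*} for r' ∈ R, and consequently |R| ≤ q^{k−1}. -/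
/-!
Two points `r₁ + a e_{i_{r₁}}` and `r₂ + b e_{i_{r₂}}` (with `a, b` arbitrary, zero included) can
only coincide if `r₁` and `r₂` differ in at most the two coordinates `i_{r₁}, i_{r₂}`; if `r₁ ≠ r₂`
one of these lies in `diff(r₁, r₂)`, contradicting the blocking property of `r₁` or of `r₂`.
Hence `(r, a) ↦ r + a e_{i_r}` is injective on `R × F_q`; its image contains `R` (at `a = 0`) and
the sets `T_r`, which gives both the uniqueness of the line through a point and `|R| · q ≤ q^k`.
-/

/-- The set of coordinates on which two vectors differ. -/
def diffSet {k : ℕ} {F : Type*} (u v : Fin k → F) : Set (Fin k) := {l | u l ≠ v l}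

section DiffSet

variable {k : ℕ} {F : Type*}

theorem diffSet_comm (u v : Fin k → F) : diffSet u v = diffSet v u := by
  ext l
  exact ne_comm

theorem diffSet_subset_union (u v w : Fin k → F) :
    diffSet u w ⊆ diffSet u v ∪ diffSet v w := fun l hl => by
  by_contra h
  simp only [Set.mem_union, not_or, diffSet, Set.mem_ofPred_eq, not_not] at h
  exact hl (h.1.trans h.2)

theorem diffSet_nonempty_of_ne {u v : Fin k → F} (h : u ≠ v) : (diffSet u v).Nonempty :=
  Function.ne_iff.mp h

theorem diffSet_add_smul_single_subset [Semiring F] (r : Fin k → F) (i : Fin k) (a : F) :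
    diffSet r (r + a • Pi.single i 1) ⊆ {i} := by
  intro l hl
  by_contra hli
  simp [diffSet, Pi.single_apply, Set.mem_singleton_iff.not.mp hli] at hl

end DiffSet

def RadiusTwoBlocking {k : ℕ} {F : Type*} (R : Set (Fin k → F)) (ir : (Fin k → F) → Fin k) :
    Prop :=
  ∀ r ∈ R, ∀ r' : Fin k → F, (diffSet r r').ncard ≤ 2 → ir r ∈ diffSet r r' → r' ∉ R

namespace RadiusTwoBlocking

variable {k : ℕ} {F : Type*} [Ring F] {R : Set (Fin k → F)} {ir : (Fin k → F) → Fin k}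

theorem eq_of_add_smul_single_eq (hR : RadiusTwoBlocking R ir) {r₁ r₂ : Fin k → F}
    (hr₁ : r₁ ∈ R) (hr₂ : r₂ ∈ R) {a b : F}
    (h : r₁ + a • Pi.single (ir r₁) 1 = r₂ + b • Pi.single (ir r₂) 1) : r₁ = r₂ := by
  by_contra hne
  have h₂ : diffSet (r₁ + a • Pi.single (ir r₁) 1) r₂ ⊆ {ir r₂} := by
    rw [h, diffSet_comm]
    exact diffSet_add_smul_single_subset _ _ _
  have hsub : diffSet r₁ r₂ ⊆ {ir r₁} ∪ {ir r₂} :=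
    (diffSet_subset_union _ _ _).trans
      (Set.union_subset_union (diffSet_add_smul_single_subset _ _ _) h₂)
  have hcard : (diffSet r₁ r₂).ncard ≤ 2 :=
    (Set.ncard_le_ncard hsub (Set.toFinite _)).trans
      ((Set.ncard_union_le _ _).trans (by simp))
  obtain ⟨l, hl⟩ := diffSet_nonempty_of_ne hne
  rcases hsub hl with rfl | rfl
  · exact hR r₁ hr₁ r₂ hcard hl hr₂
  · rw [diffSet_comm] at hcard hl
    exact hR r₂ hr₂ r₁ hcard hl hr₁

theorem injective_add_smul_single (hR : RadiusTwoBlocking R ir) :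
    Function.Injective fun p : R × F => (p.1 : Fin k → F) + p.2 • Pi.single (ir p.1) 1 := by
  rintro ⟨⟨r₁, hr₁⟩, a⟩ ⟨⟨r₂, hr₂⟩, b⟩ h
  obtain rfl : r₁ = r₂ := hR.eq_of_add_smul_single_eq hr₁ hr₂ h
  have hab := congrFun (add_left_cancel h) (ir r₁)
  simp only [Pi.smul_apply, Pi.single_eq_same, smul_eq_mul, mul_one] at hab
  rw [hab]

theorem ncard_mul_card_le [Fintype F] (hR : RadiusTwoBlocking R ir) :
    R.ncard * Fintype.card F ≤ Fintype.card F ^ k := by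
  have h := Nat.card_le_card_of_injective _ hR.injective_add_smul_single
  rwa [Nat.card_prod, Nat.card_coe_set_eq, Nat.card_eq_fintype_card,
    Nat.card_eq_fintype_card, Fintype.card_fun, Fintype.card_fin] at h

end RadiusTwoBlocking

theorem stmt11_general (F : Type*) [Field F] [Fintype F] (q k : ℕ)
    (hF : Fintype.card F = q)
    (R : Set (Fin k → F)) (ir : (Fin k → F) → Fin k)
    (hblock : ∀ r ∈ R, ∀ r' : Fin k → F,
      (diffSet r r').ncard ≤ 2 → ir r ∈ diffSet r r' → r' ∉ R)
    (T : (Fin k → F) → Set (Fin k → F))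
    (hT : ∀ r, T r = {s | ∃ a : F, a ≠ 0 ∧ s = r + a • (Pi.single (ir r) 1 : Fin k → F)}) :
    (∀ s : Fin k → F, s ∉ R → ({r' ∈ R | s ∈ T r'} : Set (Fin k → F)).ncard ≤ 1) ∧
      R.ncard ≤ q ^ (k - 1) := by
  have hR : RadiusTwoBlocking R ir := hblock
  refine ⟨fun s _ => ?_, ?_⟩
  · rw [Set.ncard_le_one_iff (Set.toFinite _)]
    rintro r₁ r₂ ⟨hr₁, h₁⟩ ⟨hr₂, h₂⟩
    rw [hT] at h₁ h₂
    obtain ⟨a, -, rfl⟩ := h₁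
    obtain ⟨b, -, h⟩ := h₂
    exact hR.eq_of_add_smul_single_eq hr₁ hr₂ h
  · have hk : 0 < k := (ir 0).pos
    have hq : 0 < q := hF ▸ Fintype.card_pos
    have hcount := hR.ncard_mul_card_le
    rw [hF, ← pow_sub_mul_pow q hk, pow_one] at hcount
    exact Nat.le_of_mul_le_mul_right hcount hq

theorem stmt11 (F : Type*) [Field F] [Fintype F] (q k : ℕ)
    (hF : Fintype.card F = q) (hq : IsPrimePow q) (hq2 : 2 ≤ q) (hk : 1 ≤ k)
    (R : Set (Fin k → F)) (ir : (Fin k → F) → Fin k)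
    (hblock : ∀ r ∈ R, ∀ r' : Fin k → F,
      (diffSet r r').ncard ≤ 2 → ir r ∈ diffSet r r' → r' ∉ R)
    (T : (Fin k → F) → Set (Fin k → F))
    (hT : ∀ r, T r = {s | ∃ a : F, a ≠ 0 ∧ s = r + a • (Pi.single (ir r) 1 : Fin k → F)}) :
    (∀ s : Fin k → F, s ∉ R → ({r' ∈ R | s ∈ T r'} : Set (Fin k → F)).ncard ≤ 1) ∧
      R.ncard ≤ q ^ (k - 1) :=
  stmt11_general F q k hF R ir hblock T hT
end
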